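/- arXiv:2410.02739 — 2 statements merged into one kernel-verified Lean document; each statement's English description precedes it below -/
import Mathlib

section
/- Let M be a locally compact Hausdorff space, let μ and μ' be finite regular Borel measures on M, let H be a separable complex Hilbert space, and let q, q' : M → B(H) be maps, continuous for the weak operator topology, whose values are rank-one orthogonal projections, and which are weakly overcomplete with respect to μ and μ' respectively. If for every compactly supported continuous function f : M → ℂ and all v, w ∈ H one has ∫_M f(x)⟨v, q(x)w⟩ dμ(x) = ∫_M f(x)⟨v, q'(x)w⟩ dμ'(x), then μ = μ' and q(x) = q'(x) for μ-almost every x ∈ M. -/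
/-!
Fix a countable Hilbert basis `(b i)` of `H`. Since every `q x` is a rank-one projection, its
trace `∑ i, ⟪b i, q x (b i)⟫` equals `1`, with nonnegative terms; integrating `f` against the
diagonal entries and summing (dominated convergence) recovers `∫ f dμ`, and likewise `∫ f dμ'`.
So `μ` and `μ'` agree on compactly supported continuous functions, hence are equal by
Riesz–Markov–Kakutani uniqueness. Then every matrix entry `⟪b i, (q x - q' x) (b j)⟫` is a
continuous function annihilating `C_c(M)` under the regular measure `μ`, so it vanishes
`μ`-a.e.; countably many entries determine the operator.
-/

open MeasureTheory
open scoped InnerProductSpace ComplexOrder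

section HilbertSpace

variable {𝕜 E : Type*} [RCLike 𝕜] [NormedAddCommGroup E] [InnerProductSpace 𝕜 E]

theorem Orthonormal.countable [TopologicalSpace.SeparableSpace E] {ι : Type*} {v : ι → E}
    (hv : Orthonormal 𝕜 v) : Countable ι := by
  -- orthonormal vectors are at distance `√2`, so the balls of radius `1/2` around them are disjoint
  refine Pairwise.countable_of_isOpen_disjoint (s := fun i => Metric.ball (v i) (1 / 2))
    (fun i j hij => Metric.ball_disjoint_ball ?_) (fun _ => Metric.isOpen_ball)
    (fun i => Metric.nonempty_ball.2 (by norm_num))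
  have hdist : dist (v i) (v j) ^ 2 = 2 := by
    rw [dist_eq_norm, @norm_sub_sq 𝕜, hv.1 i, hv.1 j, hv.2 hij]
    norm_num
  nlinarith [dist_nonneg (x := v i) (y := v j)]

theorem HilbertBasis.ext_of_inner_apply {ι : Type*} (b : HilbertBasis ι 𝕜 E) {T S : E →L[𝕜] E}
    (h : ∀ i j, ⟪b i, T (b j)⟫_𝕜 = ⟪b i, S (b j)⟫_𝕜) : T = S := by
  refine ContinuousLinearMap.ext_on (Submodule.dense_iff_topologicalClosure_eq_top.2 b.dense_span)
    ?_
  rintro - ⟨j, rfl⟩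
  exact b.repr.injective <| lp.ext <| funext fun i => by
    simp only [b.repr_apply_apply, h]

end HilbertSpace

section RankOneProjection

variable {𝕜 H : Type*} [RCLike 𝕜] [NormedAddCommGroup H] [InnerProductSpace 𝕜 H]

def IsRankOneProjection (T : H →L[𝕜] H) : Prop :=
  ∃ u : H, ‖u‖ = 1 ∧ ∀ v, T v = ⟪u, v⟫_𝕜 • u

namespace IsRankOneProjection

variable {T : H →L[𝕜] H}

theorem inner_apply_self_nonneg (hT : IsRankOneProjection T) (v : H) : 0 ≤ ⟪v, T v⟫_𝕜 := by
  obtain ⟨u, -, hu⟩ := hT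
  rw [hu, inner_smul_right, ← inner_conj_symm v u, RCLike.mul_conj]
  exact_mod_cast sq_nonneg ‖⟪u, v⟫_𝕜‖

theorem hasSum_inner_apply {ι : Type*} (hT : IsRankOneProjection T) (b : HilbertBasis ι 𝕜 H) :
    HasSum (fun i => ⟪b i, T (b i)⟫_𝕜) 1 := by
  obtain ⟨u, hu1, hu⟩ := hT
  convert b.hasSum_inner_mul_inner u u using 1
  · ext i
    rw [hu, inner_smul_right]
  · rw [inner_self_eq_norm_sq_to_K, hu1]
    norm_num

end IsRankOneProjection

end RankOneProjection

section Integrals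

variable {M : Type*} [TopologicalSpace M] [MeasurableSpace M]
variable {𝕜 : Type*} [RCLike 𝕜]

theorem hasSum_integral_mul_inner_apply [OpensMeasurableSpace M] (ν : Measure M)
    [IsFiniteMeasureOnCompacts ν] {H : Type*} [NormedAddCommGroup H] [InnerProductSpace 𝕜 H]
    {ι : Type*} [Countable ι] (b : HilbertBasis ι 𝕜 H) {Q : M → H →L[𝕜] H}
    (hQ : ∀ x, IsRankOneProjection (Q x)) (hQ_cont : ∀ i, Continuous fun x => ⟪b i, Q x (b i)⟫_𝕜)
    {f : M → 𝕜} (hf : Continuous f) (hfc : HasCompactSupport f) :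
    HasSum (fun i => ∫ x, f x * ⟪b i, Q x (b i)⟫_𝕜 ∂ν) (∫ x, f x ∂ν) := by
  have htrace : ∀ x, HasSum (fun i => RCLike.re ⟪b i, Q x (b i)⟫_𝕜) 1 := fun x => by
    simpa using ((hQ x).hasSum_inner_apply b).mapL RCLike.reCLM
  -- the diagonal entries are nonnegative, so `‖f‖` dominates the partial sums
  refine hasSum_integral_of_dominated_convergence (fun i x => ‖f x‖ * RCLike.re ⟪b i, Q x (b i)⟫_𝕜)
    (fun i => (hf.mul (hQ_cont i)).aestronglyMeasurable) (fun i => ?_)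
    (.of_forall fun x => (htrace x).summable.mul_left _) ?_
    (.of_forall fun x => by simpa using ((hQ x).hasSum_inner_apply b).mul_left (f x))
  · refine .of_forall fun x => ?_
    have hdiag : ‖⟪b i, Q x (b i)⟫_𝕜‖ = RCLike.re ⟪b i, Q x (b i)⟫_𝕜 := by
      conv_rhs => rw [← RCLike.norm_of_nonneg' ((hQ x).inner_apply_self_nonneg (b i))]
      exact (RCLike.ofReal_re _).symm
    rw [norm_mul, hdiag]
  · simp_rw [tsum_mul_left, (htrace _).tsum_eq, mul_one]
    exact hf.norm.integrable_of_hasCompactSupport hfc.norm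

end Integrals

section RegularMeasure

variable {M : Type*} [TopologicalSpace M] [T2Space M] [LocallyCompactSpace M]
  [MeasurableSpace M] {𝕜 : Type*} [RCLike 𝕜] {μ ν : Measure M}

theorem MeasureTheory.Measure.ext_of_integral_eq_of_hasCompactSupport [BorelSpace M]
    [μ.Regular] [ν.Regular]
    (h : ∀ f : M → 𝕜, Continuous f → HasCompactSupport f → ∫ x, f x ∂μ = ∫ x, f x ∂ν) :
    μ = ν := by
  refine Measure.ext_of_integral_eq_on_compactlySupported fun f => ?_
  have := h (fun x => (f x : 𝕜)) (by fun_prop) (f.hasCompactSupport.comp_left RCLike.ofReal_zero)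
  rwa [integral_ofReal, integral_ofReal, RCLike.ofReal_inj] at this

theorem IsCompact.measure_eq_zero_of_integral_mul_eq_zero [OpensMeasurableSpace M]
    [IsFiniteMeasureOnCompacts μ] {K : Set M} (hK : IsCompact K) {g : M → ℝ} (hg : Continuous g)
    (hg_nonneg : 0 ≤ g) (hgK : ∀ x ∈ K, g x ≠ 0)
    (h : ∀ φ : M → ℝ, Continuous φ → HasCompactSupport φ → ∫ x, φ x * g x ∂μ = 0) :
    μ K = 0 := by
  obtain ⟨φ, hφK, -, hφc, hφ01⟩ :=
    exists_continuous_one_zero_of_isCompact hK isClosed_empty (Set.disjoint_empty _)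
  have hint : Integrable (fun x => φ x * g x) μ :=
    (φ.continuous.mul hg).integrable_of_hasCompactSupport hφc.mul_right
  have hzero : (fun x => φ x * g x) =ᵐ[μ] 0 :=
    (integral_eq_zero_iff_of_nonneg (fun x => mul_nonneg (hφ01 x).1 (hg_nonneg x)) hint).1
      (h φ φ.continuous hφc)
  refine measure_mono_null (fun x hx => ?_) ((Measure.measure_support_eq_zero_iff μ).2 hzero)
  simp [hφK hx, hgK x hx]

theorem ae_eq_zero_of_integral_mul_eq_zero [OpensMeasurableSpace M] [μ.Regular] {g : M → ℝ}
    (hg : Continuous g) (hg_nonneg : 0 ≤ g)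
    (h : ∀ φ : M → ℝ, Continuous φ → HasCompactSupport φ → ∫ x, φ x * g x ∂μ = 0) :
    g =ᵐ[μ] 0 := by
  rw [← Measure.measure_support_eq_zero_iff μ, hg.isOpen_support.measure_eq_iSup_isCompact]
  simp only [ENNReal.iSup_eq_zero]
  exact fun K hKg hK =>
    hK.measure_eq_zero_of_integral_mul_eq_zero hg hg_nonneg (fun x hx => hKg hx) h

theorem ae_eq_of_integral_mul_eq [OpensMeasurableSpace M] [μ.Regular] {h₁ h₂ : M → 𝕜}
    (hc₁ : Continuous h₁) (hc₂ : Continuous h₂)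
    (h : ∀ f : M → 𝕜, Continuous f → HasCompactSupport f →
      ∫ x, f x * h₁ x ∂μ = ∫ x, f x * h₂ x ∂μ) :
    h₁ =ᵐ[μ] h₂ := by
  have hsq : (fun x => ‖h₁ x - h₂ x‖ ^ 2) =ᵐ[μ] 0 := by
    refine ae_eq_zero_of_integral_mul_eq_zero (by fun_prop) (fun x => by positivity)
      fun φ hφ hφc => ?_
    -- testing against `f = φ · conj (h₁ - h₂)` turns `f (h₁ - h₂)` into `φ ‖h₁ - h₂‖²`
    set f : M → 𝕜 := fun x => φ x * starRingEnd 𝕜 (h₁ x - h₂ x)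
    have hf : Continuous f :=
      (RCLike.continuous_ofReal.comp hφ).mul (RCLike.continuous_conj.comp (hc₁.sub hc₂))
    have hfc : HasCompactSupport f := (hφc.comp_left RCLike.ofReal_zero).mul_right
    have hint₁ : Integrable (fun x => f x * h₁ x) μ :=
      (hf.mul hc₁).integrable_of_hasCompactSupport hfc.mul_right
    have hint₂ : Integrable (fun x => f x * h₂ x) μ :=
      (hf.mul hc₂).integrable_of_hasCompactSupport hfc.mul_right
    have hdiff := h f hf hfc
    rw [← sub_eq_zero, ← integral_sub hint₁ hint₂] at hdiff
    simpa only [f, ← mul_sub, mul_assoc, RCLike.conj_mul, ← RCLike.ofReal_pow,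
      ← RCLike.ofReal_mul, integral_ofReal, RCLike.ofReal_eq_zero] using hdiff
  filter_upwards [hsq] with x hx
  simpa [sub_eq_zero] using hx

end RegularMeasure

theorem quantization_map_determines_coherent_states_general
    {M : Type*} [TopologicalSpace M] [LocallyCompactSpace M] [T2Space M]
    [MeasurableSpace M] [BorelSpace M]
    (μ μ' : Measure M) [μ.Regular] [μ'.Regular]
    {H : Type*} [NormedAddCommGroup H] [InnerProductSpace ℂ H] [CompleteSpace H]
    [TopologicalSpace.SeparableSpace H]
    (q q' : M → (H →L[ℂ] H))
    (hq_cont : ∀ v w : H, Continuous fun x => ⟪v, q x w⟫_ℂ)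
    (hq'_cont : ∀ v w : H, Continuous fun x => ⟪v, q' x w⟫_ℂ)
    (hq_rank1 : ∀ x, ∃ u : H, ‖u‖ = 1 ∧ ∀ v, q x v = ⟪u, v⟫_ℂ • u)
    (hq'_rank1 : ∀ x, ∃ u : H, ‖u‖ = 1 ∧ ∀ v, q' x v = ⟪u, v⟫_ℂ • u)
    (hQ : ∀ f : M → ℂ, Continuous f → HasCompactSupport f → ∀ v w : H,
      ∫ x, f x * ⟪v, q x w⟫_ℂ ∂μ = ∫ x, f x * ⟪v, q' x w⟫_ℂ ∂μ') :
    μ = μ' ∧ ∀ᵐ x ∂μ, q x = q' x := by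
  obtain ⟨ι, b, -⟩ := exists_hilbertBasis ℂ H
  have : Countable ι := b.orthonormal.countable
  have hμ : μ = μ' := Measure.ext_of_integral_eq_of_hasCompactSupport fun f hf hfc => by
    refine (hasSum_integral_mul_inner_apply μ b hq_rank1 (fun _ => hq_cont _ _) hf hfc).unique ?_
    simpa only [hQ f hf hfc] using
      hasSum_integral_mul_inner_apply μ' b hq'_rank1 (fun _ => hq'_cont _ _) hf hfc
  subst hμ
  have hentries : ∀ i j, ∀ᵐ x ∂μ, ⟪b i, q x (b j)⟫_ℂ = ⟪b i, q' x (b j)⟫_ℂ := fun i j =>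
    ae_eq_of_integral_mul_eq (hq_cont _ _) (hq'_cont _ _) fun f hf hfc => hQ f hf hfc _ _
  refine ⟨rfl, ?_⟩
  filter_upwards [ae_all_iff.2 fun i => ae_all_iff.2 (hentries i)] with x hx
  exact b.ext_of_inner_apply hx

/-- Uniqueness of the data of an abstract coherent state quantization
determined by the quantization map: if two weakly overcomplete, WOT-continuous families
of rank-one projections `q, q'` (with respect to finite regular Borel measures `μ, μ'`
on a locally compact Hausdorff space `M`) determine the same quantization map on
compactly supported continuous functions, then `μ = μ'` and `q = q'` `μ`-a.e. -/
theorem quantization_map_determines_coherent_states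
    {M : Type*} [TopologicalSpace M] [LocallyCompactSpace M] [T2Space M]
    [MeasurableSpace M] [BorelSpace M]
    (μ μ' : Measure M) [IsFiniteMeasure μ] [IsFiniteMeasure μ'] [μ.Regular] [μ'.Regular]
    {H : Type*} [NormedAddCommGroup H] [InnerProductSpace ℂ H] [CompleteSpace H]
    [TopologicalSpace.SeparableSpace H]
    (q q' : M → (H →L[ℂ] H))
    (hq_cont : ∀ v w : H, Continuous fun x => ⟪v, q x w⟫_ℂ)
    (hq'_cont : ∀ v w : H, Continuous fun x => ⟪v, q' x w⟫_ℂ)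
    (hq_rank1 : ∀ x, ∃ u : H, ‖u‖ = 1 ∧ ∀ v, q x v = ⟪u, v⟫_ℂ • u)
    (hq'_rank1 : ∀ x, ∃ u : H, ‖u‖ = 1 ∧ ∀ v, q' x v = ⟪u, v⟫_ℂ • u)
    (hq_int : ∀ v w : H, Integrable (fun x => ⟪v, q x w⟫_ℂ) μ)
    (hq_over : ∀ v w : H, ∫ x, ⟪v, q x w⟫_ℂ ∂μ = ⟪v, w⟫_ℂ)
    (hq'_int : ∀ v w : H, Integrable (fun x => ⟪v, q' x w⟫_ℂ) μ')
    (hq'_over : ∀ v w : H, ∫ x, ⟪v, q' x w⟫_ℂ ∂μ' = ⟪v, w⟫_ℂ)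
    (hQ : ∀ f : M → ℂ, Continuous f → HasCompactSupport f → ∀ v w : H,
      ∫ x, f x * ⟪v, q x w⟫_ℂ ∂μ = ∫ x, f x * ⟪v, q' x w⟫_ℂ ∂μ') :
    μ = μ' ∧ ∀ᵐ x ∂μ, q x = q' x :=
  quantization_map_determines_coherent_states_general μ μ' q q' hq_cont hq'_cont hq_rank1 hq'_rank1
    hQ
end

section
/- Let M be a topological space with a Borel measure μ and let Ω : M × M → ℂ be continuous and satisfy propagator conditions (1), (3) and (4). Let Ψ : M → ℂ be continuous. Then for every x ∈ M the function y ↦ Ψ(x)Ω(x,y) lies in L²(M, μ), and the map M → L²(M, μ), x ↦ (y ↦ Ψ(x)Ω(x,y)), is continuous; moreover for all x, x' ∈ M one has ∫_M |Ψ(x)Ω(x,y) − Ψ(x')Ω(x',y)|² dμ(y) = |Ψ(x)|² + |Ψ(x')|² − conj(Ψ(x))Ψ(x')Ω(x',x) − conj(Ψ(x'))Ψ(x)Ω(x,x'). -/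
/-!
Conditions (3) and (4) make `Ω` a reproducing kernel on `L²(μ)`: the functions `Ω x` are square
integrable and `⟪Ω x, Ω x'⟫ = ∫ Ω x' y * Ω y x dμ(y) = Ω x' x`. So the Gram function of the coherent
states is `conj (Ψ x) * Ψ x' * Ω x' x`, which is jointly continuous; the distance formula is the
expansion of `‖u - v‖²` in inner products, and a map into an inner product space whose Gram function
is continuous is itself continuous.
-/

open MeasureTheory

open scoped InnerProductSpace ComplexConjugate

theorem continuous_of_continuous_inner {𝕜 X E : Type*} [RCLike 𝕜] [TopologicalSpace X]
    [NormedAddCommGroup E] [InnerProductSpace 𝕜 E] {f : X → E}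
    (h : Continuous fun p : X × X => ⟪f p.1, f p.2⟫_𝕜) : Continuous f := by
  refine continuous_iff_continuousAt.2 fun x₀ => tendsto_iff_norm_sub_tendsto_zero.2 ?_
  have hinner {g₁ g₂ : X → X} (h₁ : Continuous g₁) (h₂ : Continuous g₂) :
      Continuous fun x => ⟪f (g₁ x), f (g₂ x)⟫_𝕜 :=
    h.comp (h₁.prodMk h₂)
  have hdist : Continuous fun x => ‖f x - f x₀‖ := by
    simp_rw [norm_eq_sqrt_re_inner (𝕜 := 𝕜), inner_sub_sub_self]
    have hdiag := hinner continuous_id continuous_id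
    have hleft := hinner continuous_id (continuous_const (y := x₀))
    have hright := hinner (continuous_const (y := x₀)) continuous_id
    fun_prop
  simpa using hdist.tendsto x₀

section L2

variable {α 𝕜 E : Type*} [MeasurableSpace α] {μ : Measure α} [RCLike 𝕜]
  [NormedAddCommGroup E] [InnerProductSpace 𝕜 E]

theorem MeasureTheory.MemLp.inner_toLp_toLp {f g : α → E} (hf : MemLp f 2 μ) (hg : MemLp g 2 μ) :
    ⟪hf.toLp, hg.toLp⟫_𝕜 = ∫ a, ⟪f a, g a⟫_𝕜 ∂μ := by
  rw [L2.inner_def]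
  refine integral_congr_ae ?_
  filter_upwards [hf.coeFn_toLp, hg.coeFn_toLp] with a hfa hga
  rw [hfa, hga]

theorem MeasureTheory.MemLp.ofReal_integral_norm_sq {f : α → E} (hf : MemLp f 2 μ) :
    ((∫ a, ‖f a‖ ^ 2 ∂μ : ℝ) : 𝕜) = ⟪hf.toLp, hf.toLp⟫_𝕜 := by
  rw [hf.inner_toLp_toLp, ← integral_ofReal]
  simp_rw [inner_self_eq_norm_sq_to_K, RCLike.ofReal_pow]

theorem memLp_two_of_integrable_mul_conj {f : α → 𝕜} (hf : AEStronglyMeasurable f μ)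
    (h : Integrable (fun a => f a * conj (f a)) μ) : MemLp f 2 μ := by
  rw [memLp_two_iff_integrable_sq_norm hf]
  simpa only [RCLike.mul_conj, ← RCLike.ofReal_pow, RCLike.ofReal_re] using h.re

end L2

section ReproducingKernel

variable {α 𝕜 : Type*} [MeasurableSpace α] {μ : Measure α} [RCLike 𝕜] {K : α → α → 𝕜}

theorem memLp_two_of_reproducing (hK : ∀ x y, K x y = conj (K y x)) {x : α}
    (hint : Integrable (fun z => K x z * K z x) μ) (hmeas : AEStronglyMeasurable (K x) μ) :
    MemLp (K x) 2 μ :=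
  memLp_two_of_integrable_mul_conj hmeas <| by simpa only [← hK] using hint

theorem inner_toLp_const_mul_of_reproducing (hK : ∀ x y, K x y = conj (K y x))
    (hrep : ∀ x y, ∫ z, K x z * K z y ∂μ = K x y) {x x' : α} {c c' : 𝕜}
    (hf : MemLp (fun y => c * K x y) 2 μ) (hf' : MemLp (fun y => c' * K x' y) 2 μ) :
    ⟪hf.toLp, hf'.toLp⟫_𝕜 = conj c * c' * K x' x := by
  have hpoint : ∀ y, ⟪c * K x y, c' * K x' y⟫_𝕜 = conj c * c' * (K x' y * K y x) := by
    intro y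
    rw [RCLike.inner_apply', hK y x, map_mul]
    ring
  simp_rw [hf.inner_toLp_toLp, hpoint, integral_const_mul, hrep]

end ReproducingKernel

/-- For a continuous propagator `Ω` (conditions (1), (3), (4)) on a
topological space with a Borel measure, and a continuous `Ψ : M → ℂ`, the coherent
states `y ↦ Ψ(x)Ω(x,y)` lie in `L²(M,μ)`, the map `x ↦ Ψ(x)Ω(x,·)` is continuous
into `L²(M,μ)`, and one has the explicit formula
`∫ |Ψ(x)Ω(x,y) − Ψ(x')Ω(x',y)|² dμ(y)
  = |Ψ(x)|² + |Ψ(x')|² − conj(Ψ x)Ψ(x')Ω(x',x) − conj(Ψ x')Ψ(x)Ω(x,x')`. -/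
theorem coherent_state_map_continuous
    {M : Type*} [TopologicalSpace M] [MeasurableSpace M] [BorelSpace M]
    (μ : Measure M)
    (Ω : M → M → ℂ)
    (hΩcont : Continuous fun p : M × M => Ω p.1 p.2)
    (h1 : ∀ x, Ω x x = 1)
    (h3 : ∀ x y, Ω x y = (starRingEnd ℂ) (Ω y x))
    (h4int : ∀ x y, Integrable (fun z => Ω x z * Ω z y) μ)
    (h4 : ∀ x y, ∫ z, Ω x z * Ω z y ∂μ = Ω x y)
    (Ψ : M → ℂ) (hΨ : Continuous Ψ) :
    ∃ hmem : ∀ x, MemLp (fun y => Ψ x * Ω x y) 2 μ,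
      Continuous (fun x => (hmem x).toLp) ∧
      ∀ x x' : M,
        ((∫ y, ‖Ψ x * Ω x y - Ψ x' * Ω x' y‖ ^ 2 ∂μ : ℝ) : ℂ) =
          (‖Ψ x‖ : ℂ) ^ 2 + (‖Ψ x'‖ : ℂ) ^ 2
            - (starRingEnd ℂ) (Ψ x) * Ψ x' * Ω x' x
            - (starRingEnd ℂ) (Ψ x') * Ψ x * Ω x x' := by
  have hmem : ∀ x, MemLp (fun y => Ψ x * Ω x y) 2 μ := fun x =>
    (memLp_two_of_reproducing h3 (h4int x x)
      (hΩcont.comp (continuous_const.prodMk continuous_id)).aestronglyMeasurable).const_mul (Ψ x)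
  have hinner : ∀ x x', ⟪(hmem x).toLp, (hmem x').toLp⟫_ℂ = conj (Ψ x) * Ψ x' * Ω x' x :=
    fun x x' => inner_toLp_const_mul_of_reproducing h3 h4 _ _
  refine ⟨hmem, continuous_of_continuous_inner (𝕜 := ℂ) ?_, fun x x' => ?_⟩
  · simp_rw [hinner]
    have hΩswap := hΩcont.comp continuous_swap
    fun_prop
  · refine ((hmem x).sub (hmem x')).ofReal_integral_norm_sq.trans ?_
    rw [(hmem x).toLp_sub (hmem x'), inner_sub_sub_self,
      hinner, hinner, hinner, hinner, h1, h1, Complex.conj_mul', Complex.conj_mul']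
    ring
end
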